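/- arXiv:1901.01108 — 2 statements merged into one kernel-verified Lean document; each statement's English description precedes it below -/
import Mathlib

section
/- For a right intensity matrix B, the limit P := lim_{t→∞} exp(t·B) exists (entrywise, as real t → ∞). -/
/-!
For `t ≥ 0`, `exp (t • B)` is row stochastic (shifting `B` by a multiple of `1` makes it
entrywise nonnegative), so on `ℂⁿ` it is a contraction for the sup norm. By Gershgorin's theorem
every complex eigenvalue of `B` is `0` or has negative real part. On a generalized eigenspace of
an eigenvalue `μ` with `μ.re < 0`, `exp (t • B)` is `e^{tμ}` times a polynomial in `t`, hence
tends to `0`. On the generalized eigenspace of `0`, boundedness forces `B` to vanish, because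
`exp (t • B) x = x + t • B x` whenever `B ^ 2 x = 0`; there `exp (t • B)` is the identity. Since
the generalized eigenspaces span `ℂⁿ`, `exp (t • B)` converges.
-/

open Matrix Filter NormedSpace Topology
open scoped Nat

theorem eq_zero_of_isBoundedUnder_norm_smul {E : Type*} [NormedAddCommGroup E] [NormedSpace ℝ E]
    {v : E} (h : IsBoundedUnder (· ≤ ·) atTop fun t : ℝ => ‖t • v‖) : v = 0 := by
  by_contra hv
  refine not_isBoundedUnder_of_tendsto_atTop ?_ h
  simp only [norm_smul, Real.norm_eq_abs]
  exact (tendsto_abs_atTop_atTop.comp tendsto_id).atTop_mul_const (norm_pos_iff.2 hv)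

theorem tendsto_cexp_mul_mul_pow_atTop_nhds_zero {μ : ℂ} (hμ : μ.re < 0) (j : ℕ) :
    Tendsto (fun t : ℝ => Complex.exp (t * μ) * (t : ℂ) ^ j) atTop (𝓝 0) := by
  rw [tendsto_zero_iff_norm_tendsto_zero]
  refine (tendsto_rpow_mul_exp_neg_mul_atTop_nhds_zero j (-μ.re) (neg_pos.2 hμ)).congr' ?_
  filter_upwards [eventually_ge_atTop 0] with t ht
  rw [norm_mul, Complex.norm_exp, norm_pow, Complex.norm_real, Real.norm_of_nonneg ht,
    Real.rpow_natCast, mul_comm]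
  simp [mul_comm]

theorem Complex.eq_zero_or_re_neg_of_mem_closedBall {μ : ℂ} {b : ℝ}
    (h : μ ∈ Metric.closedBall (b : ℂ) (-b)) : μ = 0 ∨ μ.re < 0 := by
  rw [mem_closedBall_iff_norm] at h
  have hb : 0 ≤ -b := (norm_nonneg _).trans h
  have hsq := (sq_le_sq₀ (norm_nonneg _) hb).2 h
  rw [Complex.sq_norm, Complex.normSq_apply] at hsq
  simp only [sub_re, ofReal_re, sub_im, ofReal_im, sub_zero] at hsq
  rcases lt_or_ge μ.re 0 with hre | hre
  · exact Or.inr hre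
  · left
    refine Complex.ext ?_ ?_ <;> simp only [zero_re, zero_im] <;> nlinarith [sq_nonneg μ.im]

namespace Matrix

variable {n : Type*} [Fintype n] [DecidableEq n]

theorem exists_tendsto_of_forall_exists_tendsto_mulVec {α R m : Type*} [NonAssocSemiring R]
    [TopologicalSpace R] {F : α → Matrix m n R} {l : Filter α}
    (h : ∀ x, ∃ L, Tendsto (fun a => F a *ᵥ x) l (𝓝 L)) : ∃ P, Tendsto F l (𝓝 P) := by
  choose L hL using h
  refine ⟨Matrix.of fun i j => L (Pi.single j 1) i, tendsto_pi_nhds.2 fun i =>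
    tendsto_pi_nhds.2 fun j => ?_⟩
  simpa [mulVec_single_one] using tendsto_pi_nhds.1 (hL (Pi.single j 1)) i

section RCLike

variable {𝕜 : Type*} [RCLike 𝕜]

open scoped Matrix.Norms.Operator in
theorem hasSum_exp (M : Matrix n n 𝕜) :
    HasSum (fun k => (k !⁻¹ : 𝕜) • M ^ k) (exp M) :=
  exp_series_hasSum_exp' M

theorem hasSum_exp_mulVec (M : Matrix n n 𝕜) (x : n → 𝕜) :
    HasSum (fun k => (k !⁻¹ : 𝕜) • (M ^ k *ᵥ x)) (exp M *ᵥ x) := by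
  have := (hasSum_exp M).map (mulVec.addMonoidHomLeft x)
    (continuous_id.matrix_mulVec continuous_const)
  simpa only [Function.comp_def, mulVec.addMonoidHomLeft, AddMonoidHom.coe_mk, ZeroHom.coe_mk,
    smul_mulVec] using this

theorem exp_mulVec_eq_sum_range {M : Matrix n n 𝕜} {x : n → 𝕜} {k : ℕ} (h : M ^ k *ᵥ x = 0) :
    exp M *ᵥ x = ∑ j ∈ Finset.range k, (j !⁻¹ : 𝕜) • (M ^ j *ᵥ x) := by
  refine (hasSum_exp_mulVec M x).unique (hasSum_sum_of_ne_finset_zero fun j hj => ?_)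
  obtain ⟨i, rfl⟩ := Nat.exists_eq_add_of_le (not_lt.mp (Finset.mem_range.not.mp hj))
  rw [add_comm, pow_add, ← mulVec_mulVec, h, mulVec_zero, smul_zero]

theorem exp_mulVec_of_mulVec_eq_zero {M : Matrix n n 𝕜} {x : n → 𝕜} (h : M *ᵥ x = 0) :
    exp M *ᵥ x = x := by
  rw [exp_mulVec_eq_sum_range (k := 1) (by rwa [pow_one])]
  simp

open scoped Matrix.Norms.Operator in
theorem exp_smul_one (c : 𝕜) : exp (c • 1 : Matrix n n 𝕜) = exp c • 1 := by
  rw [← Algebra.algebraMap_eq_smul_one, ← Algebra.algebraMap_eq_smul_one]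
  exact (algebraMap_exp_comm c).symm

end RCLike

section Complex

variable {M : Matrix n n ℂ} {x : n → ℂ}

theorem exp_smul_mulVec_eq_sum_of_pow_sub_mulVec_eq_zero {μ : ℂ} {k : ℕ}
    (h : (M - μ • 1) ^ k *ᵥ x = 0) (z : ℂ) :
    exp (z • M) *ᵥ x =
      ∑ j ∈ Finset.range k, (Complex.exp (z * μ) * z ^ j / j !) • ((M - μ • 1) ^ j *ᵥ x) := by
  have hsplit : z • M = (z * μ) • 1 + z • (M - μ • 1) := by
    rw [smul_sub, smul_smul]; abel
  have hnil : (z • (M - μ • 1)) ^ k *ᵥ x = 0 := by rw [smul_pow, smul_mulVec, h, smul_zero]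
  rw [hsplit, exp_add_of_commute _ _ ((Commute.one_left _).smul_left _ |>.smul_right _),
    exp_smul_one, ← Complex.exp_eq_exp_ℂ, smul_mul_assoc, one_mul, smul_mulVec,
    exp_mulVec_eq_sum_range hnil, Finset.smul_sum]
  refine Finset.sum_congr rfl fun j _ => ?_
  rw [smul_pow, smul_mulVec, smul_smul, smul_smul]
  congr 1
  field_simp

theorem tendsto_exp_smul_mulVec_nhds_zero {μ : ℂ} (hμ : μ.re < 0) {k : ℕ}
    (h : (M - μ • 1) ^ k *ᵥ x = 0) :
    Tendsto (fun t : ℝ => exp (t • M) *ᵥ x) atTop (𝓝 0) := by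
  simp_rw [← Complex.coe_smul, exp_smul_mulVec_eq_sum_of_pow_sub_mulVec_eq_zero h]
  rw [← Finset.sum_const_zero (s := Finset.range k)]
  refine tendsto_finsetSum _ fun j _ => ?_
  simpa using ((tendsto_cexp_mul_mul_pow_atTop_nhds_zero hμ j).div_const (j ! : ℂ)).smul_const
    ((M - μ • 1) ^ j *ᵥ x)

theorem mulVec_eq_zero_of_sq_mulVec_eq_zero
    (hbdd : IsBoundedUnder (· ≤ ·) atTop fun t : ℝ => ‖exp (t • M) *ᵥ x‖)
    (h : M ^ 2 *ᵥ x = 0) : M *ᵥ x = 0 := by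
  have hexp : ∀ t : ℝ, exp (t • M) *ᵥ x = x + t • (M *ᵥ x) := fun t => by
    rw [exp_mulVec_eq_sum_range (k := 2) (by rw [smul_pow, smul_mulVec, h, smul_zero])]
    simp [Finset.sum_range_succ, smul_mulVec]
  obtain ⟨C, hC⟩ := hbdd
  refine eq_zero_of_isBoundedUnder_norm_smul (isBoundedUnder_of_eventually_le (a := C + ‖x‖) ?_)
  filter_upwards [eventually_map.1 hC] with t ht
  calc ‖t • (M *ᵥ x)‖ = ‖exp (t • M) *ᵥ x - x‖ := by rw [hexp, add_sub_cancel_left]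
    _ ≤ C + ‖x‖ := (norm_sub_le _ _).trans (by gcongr)

theorem mulVec_eq_zero_of_pow_mulVec_eq_zero
    (hbdd : ∀ x, IsBoundedUnder (· ≤ ·) atTop fun t : ℝ => ‖exp (t • M) *ᵥ x‖) {k : ℕ}
    (h : M ^ k *ᵥ x = 0) : M *ᵥ x = 0 := by
  induction k generalizing x with
  | zero => rw [pow_zero, one_mulVec] at h; rw [h, mulVec_zero]
  | succ k ih =>
    rw [pow_succ, ← mulVec_mulVec] at h
    exact mulVec_eq_zero_of_sq_mulVec_eq_zero (hbdd x) (by rw [sq, ← mulVec_mulVec, ih h])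

theorem exists_tendsto_exp_smul_mulVec_of_mem_maxGenEigenspace
    (hspec : ∀ μ, Module.End.HasEigenvalue (toLin' M) μ → μ = 0 ∨ μ.re < 0)
    (hbdd : ∀ x, IsBoundedUnder (· ≤ ·) atTop fun t : ℝ => ‖exp (t • M) *ᵥ x‖) {μ : ℂ}
    (hx : x ∈ Module.End.maxGenEigenspace (toLin' M) μ) :
    ∃ L, Tendsto (fun t : ℝ => exp (t • M) *ᵥ x) atTop (𝓝 L) := by
  obtain ⟨k, hk⟩ := (Module.End.mem_maxGenEigenspace _ _ _).1 hx
  have hk' : (M - μ • 1) ^ k *ᵥ x = 0 := by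
    rw [← hk, ← toLinAlgEquiv'_apply, map_pow, map_sub, map_smul, map_one]; rfl
  rcases eq_or_ne x 0 with rfl | hx0
  · exact ⟨0, by simp⟩
  have hμ : Module.End.HasEigenvalue (toLin' M) μ :=
    Module.End.hasEigenvalue_of_hasGenEigenvalue (k := k)
      ((Submodule.ne_bot_iff _).2 ⟨x, Module.End.mem_genEigenspace_nat.2 hk, hx0⟩)
  rcases hspec μ hμ with rfl | hre
  · have hker : M *ᵥ x = 0 := mulVec_eq_zero_of_pow_mulVec_eq_zero hbdd (by simpa using hk')
    exact ⟨x, tendsto_const_nhds.congr fun t =>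
      (exp_mulVec_of_mulVec_eq_zero (by rw [smul_mulVec, hker, smul_zero])).symm⟩
  · exact ⟨0, tendsto_exp_smul_mulVec_nhds_zero hre hk'⟩

theorem exists_tendsto_exp_smul
    (hspec : ∀ μ, Module.End.HasEigenvalue (toLin' M) μ → μ = 0 ∨ μ.re < 0)
    (hbdd : ∀ x, IsBoundedUnder (· ≤ ·) atTop fun t : ℝ => ‖exp (t • M) *ᵥ x‖) :
    ∃ P, Tendsto (fun t : ℝ => exp (t • M)) atTop (𝓝 P) := by
  refine exists_tendsto_of_forall_exists_tendsto_mulVec fun x => ?_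
  have hx : x ∈ ⨆ μ, Module.End.maxGenEigenspace (toLin' M) μ := by
    rw [Module.End.iSup_maxGenEigenspace_eq_top]; trivial
  refine Submodule.iSup_induction _ hx
    (motive := fun v => ∃ L, Tendsto (fun t : ℝ => exp (t • M) *ᵥ v) atTop (𝓝 L))
    (fun μ y hy => exists_tendsto_exp_smul_mulVec_of_mem_maxGenEigenspace hspec hbdd hy)
    ⟨0, by simp⟩ fun y z ⟨Ly, hLy⟩ ⟨Lz, hLz⟩ =>
      ⟨Ly + Lz, by simpa only [mulVec_add] using hLy.add hLz⟩

end Complex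

section Real

theorem exp_apply_nonneg {M : Matrix n n ℝ} (hM : ∀ i j, 0 ≤ M i j) (i j : n) :
    0 ≤ exp M i j := by
  have hsum : HasSum (fun k => ((k !⁻¹ : ℝ) • M ^ k) i j) (exp M i j) :=
    Pi.hasSum.1 (Pi.hasSum.1 (hasSum_exp M) i) j
  exact hsum.nonneg fun k => mul_nonneg (by positivity) (pow_apply_nonneg hM k i j)

theorem exp_smul_apply_nonneg {M : Matrix n n ℝ} (hM : ∀ i j, i ≠ j → 0 ≤ M i j) {t : ℝ}
    (ht : 0 ≤ t) (i j : n) : 0 ≤ exp (t • M) i j := by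
  set c := ∑ k, |M k k|
  have hshift : ∀ i j, 0 ≤ (t • (M + c • 1)) i j := fun i j => by
    refine mul_nonneg ht ?_
    rcases eq_or_ne i j with rfl | hij
    · have : |M i i| ≤ c := Finset.single_le_sum (fun k _ => abs_nonneg (M k k)) (Finset.mem_univ i)
      simp only [add_apply, smul_apply, one_apply_eq, smul_eq_mul, mul_one]
      linarith [neg_abs_le (M i i)]
    · simpa [hij] using hM i j hij
  have hsplit : t • M = (-(t * c)) • 1 + t • (M + c • 1) := by module
  rw [hsplit, exp_add_of_commute _ _ ((Commute.one_left _).smul_left _ |>.smul_right _),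
    exp_smul_one, smul_mul_assoc, one_mul, smul_apply, smul_eq_mul]
  exact mul_nonneg (by rw [← Real.exp_eq_exp_ℝ]; positivity) (exp_apply_nonneg hshift i j)

theorem exp_smul_mem_rowStochastic {M : Matrix n n ℝ} (hM : ∀ i j, i ≠ j → 0 ≤ M i j)
    (hrow : ∀ i, ∑ j, M i j = 0) {t : ℝ} (ht : 0 ≤ t) : exp (t • M) ∈ rowStochastic ℝ n := by
  refine ⟨exp_smul_apply_nonneg hM ht, exp_mulVec_of_mulVec_eq_zero ?_⟩
  ext i
  simp [mulVec, dotProduct, ← Finset.mul_sum, hrow i]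

theorem norm_map_ofReal_mulVec_le {P : Matrix n n ℝ} (hP : P ∈ rowStochastic ℝ n)
    (x : n → ℂ) : ‖P.map (↑) *ᵥ x‖ ≤ ‖x‖ := by
  refine pi_norm_le_iff_of_nonneg (norm_nonneg x) |>.2 fun i => ?_
  calc ‖(P.map (↑) *ᵥ x) i‖ = ‖∑ j, (P i j : ℂ) * x j‖ := rfl
    _ ≤ ∑ j, P i j * ‖x‖ := (norm_sum_le _ _).trans <| Finset.sum_le_sum fun j _ => by
        rw [norm_mul, Complex.norm_real, Real.norm_of_nonneg (nonneg_of_mem_rowStochastic hP)]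
        gcongr
        · exact nonneg_of_mem_rowStochastic hP
        · exact norm_le_pi_norm x j
    _ = ‖x‖ := by rw [← Finset.sum_mul, sum_row_of_mem_rowStochastic hP, one_mul]

open scoped Matrix.Norms.Operator in
theorem exp_map_ofReal (M : Matrix n n ℝ) :
    exp (M.map ((↑) : ℝ → ℂ)) = (exp M).map (↑) :=
  (map_exp Complex.ofRealHom.mapMatrix
    (continuous_id.matrix_map Complex.continuous_ofReal) M).symm

theorem eq_zero_or_re_neg_of_hasEigenvalue_map_ofReal {M : Matrix n n ℝ}
    (hM : ∀ i j, i ≠ j → 0 ≤ M i j) (hrow : ∀ i, ∑ j, M i j = 0) {μ : ℂ}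
    (hμ : Module.End.HasEigenvalue (toLin' (M.map ((↑) : ℝ → ℂ))) μ) : μ = 0 ∨ μ.re < 0 := by
  obtain ⟨k, hk⟩ := eigenvalue_mem_ball hμ
  have hradius : ∑ j ∈ Finset.univ.erase k, ‖M.map ((↑) : ℝ → ℂ) k j‖ = -M k k := by
    rw [eq_neg_iff_add_eq_zero, add_comm, ← hrow k, ← Finset.add_sum_erase _ _ (Finset.mem_univ k)]
    congr 1
    refine Finset.sum_congr rfl fun j hj => ?_
    rw [map_apply, Complex.norm_real, Real.norm_of_nonneg (hM k j (Finset.ne_of_mem_erase hj).symm)]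
  rw [hradius] at hk
  exact Complex.eq_zero_or_re_neg_of_mem_closedBall hk

end Real

end Matrix

/-- For a right intensity matrix `B`, the limit of `exp (t • B)` as real
`t → ∞` exists. -/
theorem exp_intensity_tendsto {Z : Type*} [Fintype Z] [DecidableEq Z]
    (B : Matrix Z Z ℝ)
    (hoff : ∀ i j, i ≠ j → 0 ≤ B i j)
    (hrow : ∀ i, ∑ j, B i j = 0) :
    ∃ P : Matrix Z Z ℝ,
      Tendsto (fun t : ℝ => NormedSpace.exp (t • B)) atTop (nhds P) := by
  have hexp : ∀ t : ℝ, exp (t • B.map ((↑) : ℝ → ℂ)) = (exp (t • B)).map (↑) := fun t => by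
    rw [← exp_map_ofReal]; congr 1; ext; simp
  have hbdd : ∀ x, IsBoundedUnder (· ≤ ·) atTop
      fun t : ℝ => ‖exp (t • B.map ((↑) : ℝ → ℂ)) *ᵥ x‖ := fun x =>
    isBoundedUnder_of_eventually_le (a := ‖x‖) <| (eventually_ge_atTop 0).mono fun t ht => by
      rw [hexp]
      exact norm_map_ofReal_mulVec_le (exp_smul_mem_rowStochastic hoff hrow ht) x
  obtain ⟨P, hP⟩ := exists_tendsto_exp_smul
    (fun μ => eq_zero_or_re_neg_of_hasEigenvalue_map_ofReal hoff hrow) hbdd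
  refine ⟨P.map Complex.re, ?_⟩
  simpa [Function.comp_def, hexp, Matrix.map_map] using
    ((continuous_id.matrix_map Complex.continuous_re).tendsto P).comp hP
end

section
/- Let B be a right intensity matrix over Z, J ⊂ Z a recurrence class (i.e., B_J is irreducible and b_{ij} = 0 for i ∈ J, j ∉ J), and P := lim_{t→∞} exp(t·B). Then the submatrix P_J equals lim_{t→∞} exp(t·B_J), all rows of P_J coincide and have strictly positive entries, P_{J, Z\J} = 0, and each row of P restricted to indices in J is the unique probability row vector p with p·B_J = 0. -/
/-!
Since `J` is closed, `exp (t • B)` is block triangular for the splitting `J`, `Z \ J`: its rows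
in `J` vanish outside `J` and its `J × J` block is `exp (t • B_J)`. Adding a multiple of the
identity makes `B_J` entrywise nonnegative without changing its off-diagonal pattern, so
irreducibility makes `exp (t • B_J)` entrywise positive for `t > 0`; it is also stochastic.
The limit `Q = P_J` satisfies `exp (s • B_J) * Q = Q = Q * exp (s • B_J)`. By the first identity
every column of `Q` is a fixed vector of a positive stochastic matrix, hence constant (maximum
principle); the second gives positivity of `Q` and, differentiated at `s = 0`, `Q * B_J = 0`.
A stationary probability vector is fixed by every `exp (t • B_J)`, hence by `Q`, which forces it
to be the common row of `Q`.
-/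

open Matrix Filter

def Matrix.IsReducible {Z : Type*} (A : Matrix Z Z ℝ) : Prop :=
  ∃ I : Set Z, I.Nonempty ∧ I ≠ Set.univ ∧ ∀ i ∈ I, ∀ j ∉ I, A i j = 0

open NormedSpace Topology
open scoped Nat

section BanachAlgebra

variable {𝔸 : Type*} [NormedRing 𝔸] [CompleteSpace 𝔸]

theorem mul_exp_eq_self_of_mul_eq_zero [NormedAlgebra ℚ 𝔸] {x a : 𝔸} (h : x * a = 0) :
    x * exp a = x := by
  have hs := (exp_series_hasSum_exp' (𝕂 := ℚ) a).mul_left x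
  have hterms : (fun k : ℕ => x * ((k !⁻¹ : ℚ) • a ^ k)) = fun k => if k = 0 then x else 0 := by
    funext k
    rcases k with _ | k
    · simp
    · simp [pow_succ', ← mul_assoc, h]
  rw [hterms] at hs
  exact hs.unique (hasSum_ite_eq 0 x)

theorem exp_mul_eq_self_of_mul_eq_zero [NormedAlgebra ℚ 𝔸] {x a : 𝔸} (h : a * x = 0) :
    exp a * x = x := by
  have hs := (exp_series_hasSum_exp' (𝕂 := ℚ) a).mul_right x
  have hterms : (fun k : ℕ => (k !⁻¹ : ℚ) • a ^ k * x) = fun k => if k = 0 then x else 0 := by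
    funext k
    rcases k with _ | k
    · simp
    · simp [pow_succ, mul_assoc, h]
  rw [hterms] at hs
  exact hs.unique (hasSum_ite_eq 0 x)

variable [NormedAlgebra ℝ 𝔸] {a q : 𝔸}

theorem mul_exp_smul_eq_self_of_tendsto [NormedAlgebra ℚ 𝔸]
    (hq : Tendsto (fun t : ℝ => exp (t • a)) atTop (𝓝 q)) (s : ℝ) :
    q * exp (s • a) = q := by
  have hshift : Tendsto (fun t : ℝ => exp (t • a) * exp (s • a)) atTop (𝓝 q) := by
    simp_rw [← NormedSpace.exp_add_of_commute ((Commute.refl a).smul_left _ |>.smul_right _),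
      ← add_smul]
    exact hq.comp (tendsto_atTop_add_const_right atTop s tendsto_id)
  exact tendsto_nhds_unique (hq.mul_const _) hshift

theorem exp_smul_mul_eq_self_of_tendsto [NormedAlgebra ℚ 𝔸]
    (hq : Tendsto (fun t : ℝ => exp (t • a)) atTop (𝓝 q)) (s : ℝ) :
    exp (s • a) * q = q := by
  have hshift : Tendsto (fun t : ℝ => exp (s • a) * exp (t • a)) atTop (𝓝 q) := by
    simp_rw [← NormedSpace.exp_add_of_commute ((Commute.refl a).smul_left _ |>.smul_right _),
      ← add_smul]
    exact hq.comp (tendsto_atTop_add_const_left atTop s tendsto_id)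
  exact tendsto_nhds_unique (hq.const_mul _) hshift

theorem mul_eq_zero_of_forall_mul_exp_smul_eq_self (h : ∀ s : ℝ, q * exp (s • a) = q) :
    q * a = 0 := by
  have hderiv := (hasDerivAt_exp_smul_const (𝕂 := ℝ) a 0).const_mul q
  simp only [h, zero_smul, exp_zero, one_mul] at hderiv
  exact hderiv.unique (hasDerivAt_const 0 q)

end BanachAlgebra

namespace Matrix

variable {n : Type*}

theorem isReducible_congr_offDiag {A A' : Matrix n n ℝ} (h : ∀ i j, i ≠ j → A i j = A' i j) :
    A.IsReducible ↔ A'.IsReducible := by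
  refine exists_congr fun I => and_congr_right' <| and_congr_right' <| forall₂_congr fun i hi =>
    forall₂_congr fun j hj => ?_
  rw [h i j (ne_of_mem_of_not_mem hi hj)]

theorem blockTriangular_mem_iff {R : Type*} [Zero R] {J : Finset n} {M : Matrix n n R} :
    M.BlockTriangular (· ∈ J) ↔ ∀ i ∈ J, ∀ j ∉ J, M i j = 0 := by
  refine ⟨fun h i hi j hj => h ?_, fun h i j hij => ?_⟩
  · simp [lt_iff_le_not_ge, hi, hj]
  · obtain ⟨hi, hj⟩ := Classical.not_imp.1 (lt_iff_le_not_ge.1 hij).2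
    exact h i hi j hj

variable [Fintype n]

theorem apply_eq_of_mulVec_eq_self {S : Matrix n n ℝ} (hpos : ∀ i j, 0 < S i j)
    (hrow : S *ᵥ 1 = 1) {v : n → ℝ} (hv : S *ᵥ v = v) (i j : n) : v i = v j := by
  have : Nonempty n := ⟨i⟩
  obtain ⟨k, hk⟩ := Finite.exists_max v
  suffices hmax : ∀ l, v l = v k by rw [hmax i, hmax j]
  have hsum : ∑ l, S k l * (v k - v l) = 0 := by
    have h1 : ∑ l, S k l = 1 := by simpa [mulVec, dotProduct] using congrFun hrow k
    have h2 : ∑ l, S k l * v l = v k := by simpa [mulVec, dotProduct] using congrFun hv k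
    simp [mul_sub, Finset.sum_sub_distrib, ← Finset.sum_mul, h1, h2]
  have hterm := (Finset.sum_eq_zero_iff_of_nonneg fun l _ =>
    mul_nonneg (hpos k l).le (sub_nonneg.2 (hk l))).1 hsum
  intro l
  have := (mul_eq_zero.1 (hterm l (Finset.mem_univ l))).resolve_left (hpos k l).ne'
  linarith

section BlockTriangular

variable {R : Type*} [Semiring R] {J : Finset n} {M : Matrix n n R}

theorem BlockTriangular.sum_subtype_mul (hM : M.BlockTriangular (· ∈ J)) {i : n} (hi : i ∈ J)
    (f : n → R) : ∑ k : J, M i k * f k = ∑ k, M i k * f k := by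
  rw [Finset.sum_coe_sort J fun k => M i k * f k]
  exact Finset.sum_subset (Finset.subset_univ J) fun k _ hk => by
    rw [blockTriangular_mem_iff.1 hM i hi k hk, zero_mul]

theorem BlockTriangular.submatrix_mul (hM : M.BlockTriangular (· ∈ J)) (N : Matrix n n R) :
    (M * N).submatrix (Subtype.val : J → n) (Subtype.val : J → n) =
      M.submatrix (Subtype.val : J → n) (Subtype.val : J → n) *
        N.submatrix (Subtype.val : J → n) (Subtype.val : J → n) := by
  ext i j
  exact (hM.sum_subtype_mul i.2 fun k => N k j).symm

variable [DecidableEq n]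

theorem BlockTriangular.submatrix_pow (hM : M.BlockTriangular (· ∈ J)) (k : ℕ) :
    (M ^ k).submatrix (Subtype.val : J → n) (Subtype.val : J → n) =
      M.submatrix (Subtype.val : J → n) (Subtype.val : J → n) ^ k := by
  induction k with
  | zero => exact submatrix_one _ Subtype.val_injective
  | succ k ih => rw [pow_succ, (hM.pow k).submatrix_mul, ih, pow_succ]

end BlockTriangular

variable [DecidableEq n]

theorem exists_pow_apply_pos_of_not_isReducible {M : Matrix n n ℝ} (hM : ∀ i j, 0 ≤ M i j)
    (hirr : ¬ M.IsReducible) (i j : n) : ∃ k, 0 < (M ^ k) i j := by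
  by_contra! hnone
  -- the indices from which `j` cannot be reached form a closed class containing `i` but not `j`
  let S : Set n := {a | ∀ k, (M ^ k) a j = 0}
  have hzero : ∀ a, a ∉ S → ∃ k, 0 < (M ^ k) a j := fun a ha => by
    by_contra! h
    exact ha fun k => (h k).antisymm (pow_apply_nonneg hM k a j)
  refine hirr ⟨S, ⟨i, fun k => (hnone k).antisymm (pow_apply_nonneg hM k i j)⟩,
    fun h => ?_, fun a ha b hb => ?_⟩
  · have hj : j ∈ S := h ▸ Set.mem_univ j
    simpa using hj 0
  · obtain ⟨k, hk⟩ := hzero b hb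
    by_contra hab
    have hpath : 0 < (M ^ (k + 1)) a j := by
      rw [pow_succ', mul_apply]
      exact Finset.sum_pos' (fun l _ => mul_nonneg (hM _ _) (pow_apply_nonneg hM k _ _))
        ⟨b, Finset.mem_univ b, mul_pos ((hM a b).lt_of_ne' hab) hk⟩
    exact hpath.ne' (ha (k + 1))

open scoped Norms.Operator in
theorem hasSum_exp_apply (M : Matrix n n ℝ) (i j : n) :
    HasSum (fun k : ℕ => (k !⁻¹ : ℝ) * (M ^ k) i j) (exp M i j) :=
  Pi.hasSum.1 (Pi.hasSum.1 (exp_series_hasSum_exp' (𝕂 := ℝ) M) i) j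

theorem BlockTriangular.submatrix_exp {J : Finset n} {M : Matrix n n ℝ}
    (hM : M.BlockTriangular (· ∈ J)) :
    (NormedSpace.exp M).submatrix (Subtype.val : J → n) (Subtype.val : J → n) =
      NormedSpace.exp (M.submatrix (Subtype.val : J → n) (Subtype.val : J → n)) := by
  ext i j
  refine (hasSum_exp_apply M i j).unique ?_
  simpa only [← hM.submatrix_pow, submatrix_apply] using
    hasSum_exp_apply (M.submatrix (Subtype.val : J → n) (Subtype.val : J → n)) i j

theorem exp_apply_pos_of_pow_apply_pos {M : Matrix n n ℝ} (hM : ∀ i j, 0 ≤ M i j) {k : ℕ}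
    {i j : n} (hk : 0 < (M ^ k) i j) : 0 < exp M i j :=
  (by positivity : 0 < (k !⁻¹ : ℝ) * (M ^ k) i j).trans_le <|
    le_hasSum (hasSum_exp_apply M i j) k fun l _ =>
      mul_nonneg (by positivity) (pow_apply_nonneg hM l i j)

open scoped Norms.Operator in
theorem exp_add_smul_one (A : Matrix n n ℝ) (c : ℝ) :
    exp (A + c • (1 : Matrix n n ℝ)) = Real.exp c • exp A := by
  have hscalar : exp (algebraMap ℝ (Matrix n n ℝ) c) = algebraMap ℝ _ (Real.exp c) := by
    rw [Real.exp_eq_exp_ℝ]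
    exact (algebraMap_exp_comm c).symm
  rw [← Algebra.algebraMap_eq_smul_one, Matrix.exp_add_of_commute _ _ (Algebra.commutes c A).symm,
    hscalar, ← Algebra.commutes, Algebra.smul_def]

theorem exp_smul_apply_pos {A : Matrix n n ℝ} (hoff : ∀ i j, i ≠ j → 0 ≤ A i j)
    (hirr : ¬ A.IsReducible) {t : ℝ} (ht : 0 < t) (i j : n) : 0 < exp (t • A) i j := by
  set c : ℝ := ∑ k, |A k k|
  set M := A + c • (1 : Matrix n n ℝ)
  have hM : ∀ a b, 0 ≤ M a b := fun a b => by
    rcases eq_or_ne a b with rfl | hab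
    · have : |A a a| ≤ c := Finset.single_le_sum (f := fun k => |A k k|)
        (fun _ _ => abs_nonneg _) (Finset.mem_univ a)
      simp only [M, add_apply, smul_apply, one_apply_eq, smul_eq_mul, mul_one]
      linarith [neg_abs_le (A a a)]
    · simpa [M, one_apply_ne hab] using hoff a b hab
  have hMirr : ¬ M.IsReducible := by
    rwa [isReducible_congr_offDiag (A' := A) fun a b hab => by simp [M, one_apply_ne hab]]
  obtain ⟨k, hk⟩ := exists_pow_apply_pos_of_not_isReducible hM hMirr i j
  have htM : ∀ a b, 0 ≤ (t • M) a b := fun a b => mul_nonneg ht.le (hM a b)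
  have htMk : 0 < ((t • M) ^ k) i j := by
    rw [smul_pow, smul_apply, smul_eq_mul]
    exact mul_pos (pow_pos ht k) hk
  have hsplit : t • A = t • M + (-(t * c)) • (1 : Matrix n n ℝ) := by
    simp only [M, smul_add, smul_smul, neg_smul]
    abel
  rw [hsplit, exp_add_smul_one, smul_apply, smul_eq_mul]
  exact mul_pos (Real.exp_pos _) (exp_apply_pos_of_pow_apply_pos htM htMk)

open scoped Norms.Operator in
theorem vecMul_exp_eq_self_of_vecMul_eq_zero {A : Matrix n n ℝ} {v : n → ℝ} (h : v ᵥ* A = 0) :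
    v ᵥ* exp A = v := by
  have hrow : replicateRow n v * A = 0 := by rw [← replicateRow_vecMul, h]; rfl
  have H : replicateRow n (v ᵥ* exp A) = replicateRow n v := by
    rw [replicateRow_vecMul]
    exact mul_exp_eq_self_of_mul_eq_zero hrow
  funext j
  exact congrFun (congrFun H j) j

open scoped Norms.Operator in
theorem exp_mulVec_eq_self_of_mulVec_eq_zero {A : Matrix n n ℝ} {v : n → ℝ} (h : A *ᵥ v = 0) :
    exp A *ᵥ v = v := by
  have hcol : A * replicateCol n v = 0 := by rw [← replicateCol_mulVec, h]; rfl
  have H : replicateCol n (exp A *ᵥ v) = replicateCol n v := by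
    rw [replicateCol_mulVec]
    exact exp_mul_eq_self_of_mul_eq_zero hcol
  funext j
  exact congrFun (congrFun H j) j

section Limit

variable {A Q : Matrix n n ℝ}

theorem mulVec_one_of_tendsto_exp_smul (hrow : A *ᵥ 1 = 0)
    (hQ : Tendsto (fun t : ℝ => exp (t • A)) atTop (𝓝 Q)) : Q *ᵥ 1 = 1 := by
  have hlim : Tendsto (fun t : ℝ => exp (t • A) *ᵥ 1) atTop (𝓝 (Q *ᵥ 1)) :=
    ((continuous_id.matrix_mulVec continuous_const).tendsto Q).comp hQ
  refine tendsto_nhds_unique (hlim.congr fun t => ?_) tendsto_const_nhds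
  exact exp_mulVec_eq_self_of_mulVec_eq_zero (by rw [smul_mulVec, hrow, smul_zero])

theorem vecMul_eq_self_of_tendsto_exp_smul {p : n → ℝ} (hp : p ᵥ* A = 0)
    (hQ : Tendsto (fun t : ℝ => exp (t • A)) atTop (𝓝 Q)) : p ᵥ* Q = p := by
  have hlim : Tendsto (fun t : ℝ => p ᵥ* exp (t • A)) atTop (𝓝 (p ᵥ* Q)) :=
    ((continuous_const.matrix_vecMul continuous_id).tendsto Q).comp hQ
  refine tendsto_nhds_unique hlim (tendsto_const_nhds.congr fun t => ?_)
  exact (vecMul_exp_eq_self_of_vecMul_eq_zero (by rw [vecMul_smul, hp, smul_zero])).symm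

open scoped Norms.Operator in
theorem mul_eq_zero_of_tendsto_exp_smul
    (hQ : Tendsto (fun t : ℝ => exp (t • A)) atTop (𝓝 Q)) : Q * A = 0 :=
  mul_eq_zero_of_forall_mul_exp_smul_eq_self (mul_exp_smul_eq_self_of_tendsto hQ)

theorem apply_nonneg_of_tendsto_exp_smul (hoff : ∀ i j, i ≠ j → 0 ≤ A i j)
    (hirr : ¬ A.IsReducible) (hQ : Tendsto (fun t : ℝ => exp (t • A)) atTop (𝓝 Q)) (i j : n) :
    0 ≤ Q i j :=
  ge_of_tendsto (((continuous_apply_apply i j).tendsto Q).comp hQ) <|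
    (eventually_gt_atTop 0).mono fun _ ht => (exp_smul_apply_pos hoff hirr ht i j).le

open scoped Norms.Operator in
theorem apply_eq_of_tendsto_exp_smul (hoff : ∀ i j, i ≠ j → 0 ≤ A i j) (hrow : A *ᵥ 1 = 0)
    (hirr : ¬ A.IsReducible) (hQ : Tendsto (fun t : ℝ => exp (t • A)) atTop (𝓝 Q))
    (i i' j : n) : Q i j = Q i' j := by
  have hcol : exp ((1 : ℝ) • A) *ᵥ (fun k => Q k j) = fun k => Q k j :=
    funext fun k => congrFun (congrFun (exp_smul_mul_eq_self_of_tendsto hQ 1) k) j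
  exact apply_eq_of_mulVec_eq_self (exp_smul_apply_pos hoff hirr one_pos)
    (exp_mulVec_eq_self_of_mulVec_eq_zero (by rw [one_smul, hrow])) hcol i i'

open scoped Norms.Operator in
theorem apply_pos_of_tendsto_exp_smul (hoff : ∀ i j, i ≠ j → 0 ≤ A i j) (hrow : A *ᵥ 1 = 0)
    (hirr : ¬ A.IsReducible) (hQ : Tendsto (fun t : ℝ => exp (t • A)) atTop (𝓝 Q)) (i j : n) :
    0 < Q i j := by
  have hnonneg := apply_nonneg_of_tendsto_exp_smul hoff hirr hQ
  obtain ⟨k, hk⟩ : ∃ k, 0 < Q i k := by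
    by_contra! h
    have hsum : ∑ k, Q i k = 1 := by
      simpa [mulVec, dotProduct] using congrFun (mulVec_one_of_tendsto_exp_smul hrow hQ) i
    linarith [Finset.sum_nonpos fun k (_ : k ∈ Finset.univ) => h k]
  rw [← mul_exp_smul_eq_self_of_tendsto hQ 1, mul_apply]
  exact Finset.sum_pos' (fun l _ => mul_nonneg (hnonneg i l)
    (exp_smul_apply_pos hoff hirr one_pos l j).le)
    ⟨k, Finset.mem_univ k, mul_pos hk (exp_smul_apply_pos hoff hirr one_pos k j)⟩

theorem stationary_iff_of_tendsto_exp_smul [Nonempty n] (hoff : ∀ i j, i ≠ j → 0 ≤ A i j)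
    (hrow : A *ᵥ 1 = 0) (hirr : ¬ A.IsReducible)
    (hQ : Tendsto (fun t : ℝ => exp (t • A)) atTop (𝓝 Q)) (p : n → ℝ) :
    ((∀ j, 0 ≤ p j) ∧ ∑ j, p j = 1 ∧ p ᵥ* A = 0) ↔ ∀ i j, Q i j = p j := by
  constructor
  · rintro ⟨-, hp1, hpA⟩ i j
    calc Q i j = ∑ k, p k * Q i j := by rw [← Finset.sum_mul, hp1, one_mul]
      _ = ∑ k, p k * Q k j := Finset.sum_congr rfl fun k _ => by
        rw [apply_eq_of_tendsto_exp_smul hoff hrow hirr hQ k i j]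
      _ = p j := congrFun (vecMul_eq_self_of_tendsto_exp_smul hpA hQ) j
  · intro h
    obtain ⟨i⟩ := ‹Nonempty n›
    obtain rfl : p = fun j => Q i j := funext fun j => (h i j).symm
    refine ⟨apply_nonneg_of_tendsto_exp_smul hoff hirr hQ i, ?_, ?_⟩
    · simpa [mulVec, dotProduct] using congrFun (mulVec_one_of_tendsto_exp_smul hrow hQ) i
    · exact funext fun j => congrFun (congrFun (mul_eq_zero_of_tendsto_exp_smul hQ) i) j

end Limit

end Matrix

/-- Let `J` be a recurrence class of the right intensity matrix `B`
(`B_J` irreducible and rows of `J` vanishing outside `J`) and `P` the final limit of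
`exp (t • B)`. Then `P_J = lim exp (t • B_J)`, `P_{J, Z\J} = 0`, all rows of `P_J`
coincide and are strictly positive, and the common row of `P` on `J` is the unique
probability vector `p` with `p ᵥ* B_J = 0`. -/
theorem final_limit_on_recurrence_class {Z : Type*} [Fintype Z] [DecidableEq Z]
    (B : Matrix Z Z ℝ)
    (hoff : ∀ i j, i ≠ j → 0 ≤ B i j)
    (hrow : ∀ i, ∑ j, B i j = 0)
    (J : Finset Z) (hJne : J.Nonempty)
    (hclosed : ∀ i ∈ J, ∀ j, j ∉ J → B i j = 0)
    (hirr : ¬ (B.submatrix (Subtype.val : {x // x ∈ J} → Z)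
        (Subtype.val : {x // x ∈ J} → Z)).IsReducible)
    (P : Matrix Z Z ℝ)
    (hP : Tendsto (fun t : ℝ => NormedSpace.exp (t • B)) atTop (nhds P)) :
    Tendsto (fun t : ℝ =>
        NormedSpace.exp (t • B.submatrix (Subtype.val : {x // x ∈ J} → Z)
          (Subtype.val : {x // x ∈ J} → Z)))
      atTop
      (nhds (P.submatrix (Subtype.val : {x // x ∈ J} → Z)
        (Subtype.val : {x // x ∈ J} → Z))) ∧
    (∀ i ∈ J, ∀ j, j ∉ J → P i j = 0) ∧
    (∀ i ∈ J, ∀ i' ∈ J, ∀ j ∈ J, P i j = P i' j) ∧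
    (∀ i ∈ J, ∀ j ∈ J, 0 < P i j) ∧
    (∀ p : {x // x ∈ J} → ℝ,
      ((∀ j, 0 ≤ p j) ∧ (∑ j, p j = 1) ∧
        p ᵥ* B.submatrix (Subtype.val : {x // x ∈ J} → Z)
          (Subtype.val : {x // x ∈ J} → Z) = 0)
      ↔ (∀ i ∈ J, ∀ j : {x // x ∈ J}, P i j = p j)) := by
  set A := B.submatrix (Subtype.val : {x // x ∈ J} → Z) (Subtype.val : {x // x ∈ J} → Z)
  have hB : B.BlockTriangular (· ∈ J) := blockTriangular_mem_iff.2 hclosed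
  have hBt : ∀ t : ℝ, (t • B).BlockTriangular (· ∈ J) := fun t i j hij => by simp [hB hij]
  have hQ : Tendsto (fun t : ℝ => exp (t • A)) atTop
      (𝓝 (P.submatrix (Subtype.val : {x // x ∈ J} → Z) (Subtype.val : {x // x ∈ J} → Z))) := by
    refine (((continuous_id.matrix_submatrix _ _).tendsto P).comp hP).congr fun t => ?_
    exact (hBt t).submatrix_exp
  have hoffA : ∀ i j, i ≠ j → 0 ≤ A i j := fun i j hij => hoff i j (Subtype.val_injective.ne hij)
  have hrowA : A *ᵥ 1 = 0 :=
    funext fun i => (hB.sum_subtype_mul i.2 1).trans (by simpa using hrow i)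
  have : Nonempty J := hJne.to_subtype
  refine ⟨hQ, fun i hi j hj => ?_,
    fun i hi i' hi' j hj =>
      apply_eq_of_tendsto_exp_smul hoffA hrowA hirr hQ ⟨i, hi⟩ ⟨i', hi'⟩ ⟨j, hj⟩,
    fun i hi j hj => apply_pos_of_tendsto_exp_smul hoffA hrowA hirr hQ ⟨i, hi⟩ ⟨j, hj⟩,
    fun p => (stationary_iff_of_tendsto_exp_smul hoffA hrowA hirr hQ p).trans Subtype.forall⟩
  refine tendsto_nhds_unique (((continuous_apply_apply i j).tendsto P).comp hP) ?_
  exact tendsto_const_nhds.congr fun t => (blockTriangular_mem_iff.1 (hBt t).exp i hi j hj).symm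
end
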